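/- arXiv:1005.2590 — 2 statements merged into one kernel-verified Lean document; each statement's English description precedes it below -/
import Mathlib

section
/- If D ≤_RK E and E ≤_RK D, then D and E are isomorphic ultrafilters; that is, there exist sets A ∈ D and B ∈ E and a bijection g : A → B such that for every Y ⊆ B, Y ∈ E iff g⁻¹(Y) ∈ D. -/
/-!
If `D = f_* E` and `E = g_* D`, then `f ∘ g` fixes `D`. A self-map `k` fixing an ultrafilter is
the identity on a set in it: the graph `x — k x` has a colouring `c` with three colours away from
the fixed points, and `c ∘ k` and `c` push `D` to the same ultrafilter on the finite set of
colours, hence agree on a set in `D`, which therefore consists of fixed points. On the fixed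
points of `f ∘ g` the map `g` has left inverse `f`, so it is a bijection onto its image, and it
transports `D` to `E`.
-/

open Function

/-- `E ≤_RK D`: `E` is a pushforward of `D`. -/
def RudinKeislerLE {I J : Type*} (E : Ultrafilter J) (D : Ultrafilter I) : Prop :=
  ∃ f : I → J, E = Ultrafilter.map f D

def tricolor (n : ℕ) : Fin 3 := if n = 0 then 0 else ⟨n % 2 + 1, by omega⟩

theorem tricolor_eq_iff {a b : ℕ} :
    tricolor a = tricolor b ↔ (a = 0 ↔ b = 0) ∧ (a = 0 ∨ a % 2 = b % 2) := by
  unfold tricolor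
  split_ifs <;> simp only [Fin.ext_iff, Fin.val_zero] <;> grind

namespace Function

open scoped Classical

variable {α : Type*} (k : α → α)

def eventualCycle (x : α) : Set α := periodicPts k ∩ Set.range (k^[·] x)

noncomputable def cycleBase (x : α) : α :=
  @Classical.epsilon α ⟨x⟩ (· ∈ eventualCycle k x)

def grandOrbit (x : α) : Set α := {y | ∃ p : ℕ × ℕ, k^[p.1] x = k^[p.2] y}

noncomputable def grandOrbitRep (x : α) : α :=
  @Classical.epsilon α ⟨x⟩ (· ∈ grandOrbit k x)

variable {k}

theorem eventualCycle_apply (x : α) : eventualCycle k (k x) = eventualCycle k x := by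
  ext y
  constructor
  · rintro ⟨hy, n, rfl⟩
    exact ⟨hy, n + 1, rfl⟩
  · rintro ⟨⟨p, hp, hy⟩, n, rfl⟩
    refine ⟨⟨p, hp, hy⟩, n + p - 1, ?_⟩
    simp only
    rw [← iterate_succ_apply, show (n + p - 1).succ = p + n by omega, iterate_add_apply, hy.eq]

theorem eventualCycle_iterate (n : ℕ) (x : α) :
    eventualCycle k (k^[n] x) = eventualCycle k x :=
  congrFun (iterate_invariant (g := eventualCycle k) (funext eventualCycle_apply) n) x

theorem cycleBase_apply (x : α) : cycleBase k (k x) = cycleBase k x := by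
  simp only [cycleBase, eventualCycle_apply]

theorem exists_iterate_eq_cycleBase {x : α} (hx : (eventualCycle k x).Nonempty) :
    ∃ n, k^[n] x = cycleBase k x :=
  (Classical.epsilon_spec (p := (· ∈ eventualCycle k x)) hx).2

theorem tricolor_find_iterate_apply_ne {x b : α} (hx : ∃ n, k^[n] x = b)
    (hkx : ∃ n, k^[n] (k x) = b) (hne : k x ≠ x) :
    tricolor (Nat.find hkx) ≠ tricolor (Nat.find hx) := by
  rw [Ne, tricolor_eq_iff]
  by_cases hb : x = b
  · have hkx0 : Nat.find hkx ≠ 0 := fun h0 => hne <| by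
      have := Nat.find_spec hkx
      rw [h0] at this
      exact this.trans hb.symm
    have hx0 : Nat.find hx = 0 := (Nat.find_eq_zero hx).2 hb
    grind
  · have : Nat.find hx = Nat.find hkx + 1 := Nat.find_comp_succ hx hkx hb
    grind

theorem iterate_injective_of_eventualCycle_eq_empty {x : α} (hx : eventualCycle k x = ∅) :
    Injective (k^[·] x) := by
  suffices ∀ a b, a < b → k^[a] x ≠ k^[b] x by
    intro a b hab
    by_contra hne
    rcases Nat.lt_or_gt_of_ne hne with h | h
    exacts [this a b h hab, this b a h hab.symm]
  intro a b hab heq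
  have hper : IsPeriodicPt k (b - a) (k^[a] x) := by
    rw [IsPeriodicPt, IsFixedPt, ← iterate_add_apply, Nat.sub_add_cancel hab.le, heq]
  exact (Set.eq_empty_iff_forall_notMem.mp hx) _ ⟨⟨b - a, by omega, hper⟩, a, rfl⟩

theorem add_eq_add_of_iterate_eq {x y : α} (hx : eventualCycle k x = ∅) {m n m' n' : ℕ}
    (h : k^[m] x = k^[n] y) (h' : k^[m'] x = k^[n'] y) : m + n' = m' + n := by
  have hy : eventualCycle k y = ∅ := by
    rw [← eventualCycle_iterate n, ← h, eventualCycle_iterate, hx]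
  apply iterate_injective_of_eventualCycle_eq_empty hy
  simp only
  rw [iterate_add_apply, ← h', iterate_add_apply, ← h, ← iterate_add_apply, ← iterate_add_apply,
    add_comm]

theorem grandOrbit_apply (x : α) : grandOrbit k (k x) = grandOrbit k x := by
  ext y
  constructor
  · rintro ⟨⟨m, n⟩, h⟩
    exact ⟨⟨m + 1, n⟩, h⟩
  · rintro ⟨⟨m, n⟩, h⟩
    refine ⟨⟨m, n + 1⟩, ?_⟩
    simp only at h ⊢
    rw [← iterate_succ_apply, iterate_succ_apply', h, iterate_succ_apply']

theorem grandOrbitRep_apply (x : α) : grandOrbitRep k (k x) = grandOrbitRep k x := by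
  simp only [grandOrbitRep, grandOrbit_apply]

theorem grandOrbitRep_mem (x : α) : grandOrbitRep k x ∈ grandOrbit k x :=
  Classical.epsilon_spec ⟨x, (0, 0), rfl⟩

variable (k)

noncomputable def grandOrbitWitness (x : α) : ℕ × ℕ := (grandOrbitRep_mem (k := k) x).choose

theorem iterate_grandOrbitWitness (x : α) :
    k^[(grandOrbitWitness k x).1] x = k^[(grandOrbitWitness k x).2] (grandOrbitRep k x) :=
  (grandOrbitRep_mem x).choose_spec

/-- On an eventually periodic orbit, colour `x` by the time it needs to reach the base point of
its cycle; elsewhere by the parity of the height `m - n`, where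
`k^[m] x = k^[n] (grandOrbitRep k x)`, which is well defined by `add_eq_add_of_iterate_eq`. -/
noncomputable def tricoloring (x : α) : Fin 3 :=
  if hx : (eventualCycle k x).Nonempty then tricolor (Nat.find (exists_iterate_eq_cycleBase hx))
  else tricolor ((grandOrbitWitness k x).1 + (grandOrbitWitness k x).2 + 1)

variable {k}

theorem tricoloring_apply_ne {x : α} (hne : k x ≠ x) : tricoloring k (k x) ≠ tricoloring k x := by
  by_cases hx : (eventualCycle k x).Nonempty
  · have hkx : (eventualCycle k (k x)).Nonempty := by rwa [eventualCycle_apply]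
    simp only [tricoloring, dif_pos hx, dif_pos hkx]
    convert tricolor_find_iterate_apply_ne (exists_iterate_eq_cycleBase hx)
      (cycleBase_apply x ▸ exists_iterate_eq_cycleBase hkx) hne using 3
    rw [cycleBase_apply]
  · have hkx : ¬ (eventualCycle k (k x)).Nonempty := by rwa [eventualCycle_apply]
    simp only [tricoloring, dif_neg hx, dif_neg hkx, Ne, tricolor_eq_iff]
    have h₀ := iterate_grandOrbitWitness k x
    have h₁ := iterate_grandOrbitWitness k (k x)
    rw [grandOrbitRep_apply, ← iterate_succ_apply] at h₁
    have := add_eq_add_of_iterate_eq (Set.not_nonempty_iff_eq_empty.mp hx) h₀ h₁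
    grind

end Function

namespace Ultrafilter

variable {α β : Type*}

theorem eventuallyEq_of_map_eq [Finite β] {D : Ultrafilter α} {f g : α → β}
    (h : D.map f = D.map g) : f =ᶠ[(D : Filter α)] g := by
  obtain ⟨b, hb⟩ := (D.map f).eq_pure_of_finite
  have hf : f ⁻¹' {b} ∈ D := mem_map.mp (hb ▸ mem_pure.mpr rfl)
  have hg : g ⁻¹' {b} ∈ D := mem_map.mp (h ▸ hb ▸ mem_pure.mpr rfl)
  filter_upwards [hf, hg] with x hfx hgx
  exact hfx.trans hgx.symm

theorem fixedPoints_mem_of_map_eq {D : Ultrafilter α} {k : α → α} (h : D.map k = D) :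
    fixedPoints k ∈ D := by
  have hc : D.map (tricoloring k ∘ k) = D.map (tricoloring k) := by rw [← map_map, h]
  filter_upwards [eventuallyEq_of_map_eq hc] with x hx
  by_contra hne
  exact tricoloring_apply_ne hne hx

end Ultrafilter

theorem rudinKeisler_antisymm_up_to_iso {I J : Type*} (D : Ultrafilter I) (E : Ultrafilter J)
    (h1 : RudinKeislerLE D E) (h2 : RudinKeislerLE E D) :
    ∃ A ∈ D, ∃ B ∈ E, ∃ g : I → J, Set.BijOn g A B ∧
      ∀ Y : Set J, Y ⊆ B → (Y ∈ E ↔ g ⁻¹' Y ∈ D) := by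
  obtain ⟨f, hf⟩ := h1
  obtain ⟨g, hg⟩ := h2
  have hA : fixedPoints (f ∘ g) ∈ D := by
    refine Ultrafilter.fixedPoints_mem_of_map_eq ?_
    rw [← Ultrafilter.map_map, ← hg, ← hf]
  refine ⟨_, hA, g '' fixedPoints (f ∘ g), ?_, g, ?_, fun Y _ => by rw [hg, Ultrafilter.mem_map]⟩
  · rw [hg]
    exact Filter.image_mem_map hA
  · exact Set.LeftInvOn.injOn (f₁' := f) (fun x hx => hx) |>.bijOn_image
end

section
/- Let (E_k)_{k ∈ K} and (D_h)_{h ∈ H} be families of ultrafilters. Suppose that every topological space that is D_h-compact for all h ∈ H is E_k-compact for some k ∈ K. Then there exists a single k ∈ K such that every topological space that is D_h-compact for all h ∈ H is E_k-compact. -/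
/-!
Suppose no single `E k` works, and pick for every `k` a space `X k` that is `D h`-compact for
all `h` but not `E k`-compact. Their Fréchet union is `D h`-compact for every `h`: a family
either lies in one summand along the ultrafilter, where that summand supplies a limit, or
leaves every summand along it and then converges to `∞`. By hypothesis the union is
`E k`-compact for some `k`, and so is its closed subspace `X k`, a contradiction.
-/

universe u

/-- A topological space `X` is `D`-compact if every `I`-indexed family in `X` has a
`D`-limit point. -/
def UltrafilterCompact {I : Type*} (X : Type*) [TopologicalSpace X] (D : Ultrafilter I) : Prop :=
  ∀ x : I → X, ∃ p : X, ∀ U ∈ nhds p, {i : I | x i ∈ U} ∈ D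

open Filter Set Topology

theorem ultrafilterCompact_iff_exists_tendsto {I X : Type*} [TopologicalSpace X]
    (D : Ultrafilter I) :
    UltrafilterCompact X D ↔ ∀ x : I → X, ∃ p, Tendsto x D (𝓝 p) :=
  Iff.rfl

theorem UltrafilterCompact.of_isClosedEmbedding {I X Y : Type*} [TopologicalSpace X]
    [TopologicalSpace Y] {D : Ultrafilter I} {f : X → Y} (hf : IsClosedEmbedding f)
    (hY : UltrafilterCompact Y D) : UltrafilterCompact X D := by
  rw [ultrafilterCompact_iff_exists_tendsto] at hY ⊢
  intro x
  obtain ⟨p, hp⟩ := hY (f ∘ x)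
  obtain ⟨q, rfl⟩ : p ∈ range f :=
    hf.isClosed_range.mem_of_tendsto hp (Eventually.of_forall fun i => mem_range_self (x i))
  exact ⟨q, hf.tendsto_nhds_iff.mpr hp⟩

theorem UltrafilterCompact.exists_tendsto_of_eventually_mem_range {I X Y : Type*}
    [TopologicalSpace X] [TopologicalSpace Y] {D : Ultrafilter I} {f : X → Y}
    (hf : Continuous f) (hX : UltrafilterCompact X D) {y : I → Y}
    (hy : ∀ᶠ i in D, y i ∈ range f) : ∃ p, Tendsto y D (𝓝 p) := by
  obtain ⟨-, x, -⟩ := hy.exists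
  have : Nonempty X := ⟨x⟩
  have hx : ∀ᶠ i in D, f (Function.invFun f (y i)) = y i :=
    hy.mono fun i hi => Function.invFun_eq hi
  obtain ⟨p, hp⟩ := hX (Function.invFun f ∘ y)
  exact ⟨f p, ((hf.tendsto p).comp hp).congr' hx⟩

def FrechetUnion {K : Type*} (X : K → Type*) : Type _ := Option (Σ k, X k)

namespace FrechetUnion

variable {K : Type*} {X : K → Type*} [∀ k, TopologicalSpace (X k)]

def infty : FrechetUnion X := none

def ι (k : K) (x : X k) : FrechetUnion X := some ⟨k, x⟩

/-- `⊔` is the coarser topology: a set is open iff its traces on the summands are open and,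
if it contains `infty`, it contains all but finitely many summands. -/
instance : TopologicalSpace (FrechetUnion X) :=
  TopologicalSpace.coinduced some inferInstance ⊔
    nhdsAdjoint infty (map some (comap Sigma.fst cofinite))

theorem continuous_ι (k : K) : Continuous (ι (X := X) k) := by
  have : @Continuous _ (FrechetUnion X) _ _ some :=
    continuous_iff_coinduced_le.mpr le_sup_left
  exact this.comp continuous_sigmaMk

omit [∀ k, TopologicalSpace (X k)] in
theorem ι_injective (k : K) : Function.Injective (ι (X := X) k) := fun _ _ h =>
  sigma_mk_injective (Option.some_injective _ h)

omit [∀ k, TopologicalSpace (X k)] in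
theorem ι_ne_ι {j k : K} (h : j ≠ k) (x : X j) (y : X k) : ι j x ≠ ι k y := fun hxy =>
  h (congrArg Sigma.fst (Option.some_injective _ hxy))

theorem isClosedMap_ι (k : K) : IsClosedMap (ι (X := X) k) := by
  intro C hC
  rw [← isOpen_compl_iff]
  refine isOpen_sup.mpr ⟨isOpen_coinduced.mpr (isOpen_sigma_iff.mpr fun j => ?_), fun _ => ?_⟩
  · change IsOpen (ι j ⁻¹' (ι k '' C))ᶜ
    by_cases hj : j = k
    · subst hj
      rw [(ι_injective j).preimage_image]
      exact hC.isOpen_compl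
    · have : ι j ⁻¹' (ι k '' C) = ∅ :=
        eq_empty_of_forall_notMem fun x ⟨y, _, hy⟩ => ι_ne_ι hj x y hy.symm
      simp [this]
  · refine mem_map.mpr (mem_comap.mpr ⟨{k}ᶜ, (finite_singleton k).compl_mem_cofinite, ?_⟩)
    rintro ⟨j, x⟩ hj ⟨y, -, hy⟩
    exact ι_ne_ι hj x y hy.symm

theorem isClosedEmbedding_ι (k : K) : IsClosedEmbedding (ι (X := X) k) :=
  .of_continuous_injective_isClosedMap (continuous_ι k) (ι_injective k) (isClosedMap_ι k)

theorem tendsto_infty {I : Type*} {l : Filter I} {y : I → FrechetUnion X}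
    (hy : ∀ k, ∀ᶠ i in l, y i ∉ range (ι k)) : Tendsto y l (𝓝 infty) := by
  have hle : pure infty ⊔ map some (comap Sigma.fst cofinite) ≤ 𝓝 (infty : FrechetUnion X) := by
    rw [← nhds_nhdsAdjoint_same]
    exact nhds_mono le_sup_right
  refine tendsto_def.mpr fun U hU => ?_
  obtain ⟨hU_infty, hU_cofinite⟩ := mem_sup.mp (hle hU)
  obtain ⟨t, ht, hsub⟩ := mem_comap.mp (mem_map.mp hU_cofinite)
  filter_upwards [(eventually_all_finite ht).mpr fun k _ => hy k] with i hi
  change y i ∈ U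
  rcases hyi : y i with _ | ⟨k, x⟩
  · exact mem_pure.mp hU_infty
  · by_cases hk : k ∈ t
    · exact hsub (a := ⟨k, x⟩) hk
    · exact (hi k hk ⟨x, hyi.symm⟩).elim

theorem ultrafilterCompact_iff {I : Type*} (D : Ultrafilter I) :
    UltrafilterCompact (FrechetUnion X) D ↔ ∀ k, UltrafilterCompact (X k) D := by
  refine ⟨fun h k => h.of_isClosedEmbedding (isClosedEmbedding_ι k), fun h y => ?_⟩
  by_cases hy : ∃ k, ∀ᶠ i in D, y i ∈ range (ι k)
  · obtain ⟨k, hk⟩ := hy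
    exact (h k).exists_tendsto_of_eventually_mem_range (continuous_ι k) hk
  · exact ⟨infty, tendsto_infty fun k => Ultrafilter.eventually_not.mpr fun hk => hy ⟨k, hk⟩⟩

end FrechetUnion

theorem exists_single_comfort_witness {K H : Type u} {J : K → Type u} {IFam : H → Type u}
    (E : ∀ k, Ultrafilter (J k)) (D : ∀ h, Ultrafilter (IFam h))
    (hyp : ∀ (X : Type u) (_ : TopologicalSpace X),
      (∀ h, UltrafilterCompact X (D h)) → ∃ k, UltrafilterCompact X (E k)) :
    ∃ k, ∀ (X : Type u) (_ : TopologicalSpace X),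
      (∀ h, UltrafilterCompact X (D h)) → UltrafilterCompact X (E k) := by
  by_contra! hcon
  choose X _ hXD hXE using hcon
  obtain ⟨k, hk⟩ := hyp (FrechetUnion X) inferInstance fun h =>
    (FrechetUnion.ultrafilterCompact_iff (D h)).mpr fun k => hXD k h
  exact hXE k ((FrechetUnion.ultrafilterCompact_iff (E k)).mp hk k)
end
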